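/- Let ζ₁, …, ζ_N be complex numbers. Then for every z ∈ ℂ with |z| = 1, the 2×2 matrix product Π_{k=N}^{1} (1+|ζ_k|²)^{-1/2}·[[1, ζ_k z^{-k}],[−conj(ζ_k) z^k, 1]] (factors multiplied with the k = N factor leftmost) equals the matrix [[conj(d_N(z)), −conj(c_N(z))],[c_N(z), d_N(z)]]. Consequently this product lies in SU(2) for every |z| = 1; in particular |c_N(z)|² + |d_N(z)|² = 1 for all |z| = 1, c_N(0) = 0, and d_N(0) = Π_{k=1}^{N} (1+|ζ_k|²)^{-1/2} > 0. -/

import Mathlib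

open Polynomial

/-- The pair of polynomials `(c_N, d_N)`: `c_0 = 0`, `d_0 = 1`, and for `N ≥ 1`,
`c_N = (1+|ζ_N|²)^{-1/2} (c_{N-1} − conj(ζ_N) ∑_k conj((d_{N-1})_k) z^{N-k})`,
`d_N = (1+|ζ_N|²)^{-1/2} (d_{N-1} + conj(ζ_N) ∑_k conj((c_{N-1})_k) z^{N-k})`. -/
noncomputable def cdPair (ζ : ℕ → ℂ) : ℕ → Polynomial ℂ × Polynomial ℂ
  | 0 => (0, 1)
  | (N + 1) =>
    let c := (cdPair ζ N).1
    let d := (cdPair ζ N).2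
    let a : ℂ := ((Real.sqrt (1 + ‖ζ (N + 1)‖ ^ 2))⁻¹ : ℝ)
    (Polynomial.C a * (c - Polynomial.C (starRingEnd ℂ (ζ (N + 1))) *
        ∑ k ∈ Finset.range (N + 1),
          Polynomial.C (starRingEnd ℂ (d.coeff k)) * Polynomial.X ^ (N + 1 - k)),
     Polynomial.C a * (d + Polynomial.C (starRingEnd ℂ (ζ (N + 1))) *
        ∑ k ∈ Finset.range (N + 1),
          Polynomial.C (starRingEnd ℂ (c.coeff k)) * Polynomial.X ^ (N + 1 - k)))

/-- The `k`-th factor `(1+|ζ_k|²)^{-1/2} [[1, ζ_k z^{-k}], [−conj(ζ_k) z^k, 1]]` of the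
partial products of root subgroup factorization, for `|z| = 1` (so `z ≠ 0`). -/
noncomputable def rsFactor (ζ : ℕ → ℂ) (k : ℕ) (z : ℂ) : Matrix (Fin 2) (Fin 2) ℂ :=
  (((Real.sqrt (1 + ‖ζ k‖ ^ 2))⁻¹ : ℝ) : ℂ) •
    !![1, ζ k * z ^ (-(k : ℤ)); -(starRingEnd ℂ (ζ k)) * z ^ (k : ℤ), 1]

/-!
For `|z| = 1` we have `conj (z ^ k) = z ^ (-k)`, so each factor has the shape
`[[conj d, -conj c], [c, d]]` with `|c|² + |d|² = 1`, and matrices of this shape are closed under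
multiplication. Multiplying on the left by the `(N+1)`-st factor reproduces the recursion
for `(c_{N+1}, d_{N+1})`, because for `deg p ≤ N` the reflected polynomial
`∑ conj(p_k) X^{N+1-k}` takes the value `z^{N+1} conj(p(z))` on the unit circle. Membership
in `SU(2)` holds factor by factor, and the determinant of the product is `|c_N(z)|² + |d_N(z)|²`.
At `z = 0` every term of the reflected sum vanishes, so `c_N(0) = 0` and `d_N(0)` is the
product of the normalising factors.
-/

open ComplexConjugate

noncomputable def conjShift (n : ℕ) (p : ℂ[X]) : ℂ[X] :=
  ∑ k ∈ Finset.range n, C (conj (p.coeff k)) * X ^ (n - k)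

lemma natDegree_conjShift_le (n : ℕ) (p : ℂ[X]) : (conjShift n p).natDegree ≤ n :=
  natDegree_sum_le_of_forall_le _ _ fun _ _ =>
    (natDegree_C_mul_le _ _).trans ((natDegree_pow_le_of_le _ natDegree_X_le).trans (by simp))

lemma eval_zero_conjShift (n : ℕ) (p : ℂ[X]) : (conjShift n p).eval 0 = 0 := by
  rw [conjShift, eval_finsetSum]
  refine Finset.sum_eq_zero fun k hk => ?_
  simp [zero_pow (Nat.sub_ne_zero_of_lt (Finset.mem_range.mp hk))]

lemma eval_conjShift {n : ℕ} {p : ℂ[X]} (hp : p.natDegree < n) {z : ℂ} (hz : ‖z‖ = 1) :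
    (conjShift n p).eval z = z ^ n * conj (p.eval z) := by
  have hz0 : z ≠ 0 := norm_ne_zero_iff.mp (by rw [hz]; exact one_ne_zero)
  rw [conjShift, p.eval_eq_sum_range' hp, map_sum, Finset.mul_sum, eval_finsetSum]
  refine Finset.sum_congr rfl fun k hk => ?_
  rw [eval_mul, eval_C, eval_pow, eval_X, map_mul, map_pow, ← Complex.inv_eq_conj hz,
    pow_sub₀ z hz0 (Finset.mem_range.mp hk).le, inv_pow]
  field_simp

noncomputable def rsScale (w : ℂ) : ℝ := (Real.sqrt (1 + ‖w‖ ^ 2))⁻¹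

lemma rsScale_pos (w : ℂ) : 0 < rsScale w := by
  unfold rsScale; positivity

lemma rsScale_sq_mul (w : ℂ) : rsScale w ^ 2 * (1 + ‖w‖ ^ 2) = 1 := by
  rw [rsScale, inv_pow, Real.sq_sqrt (by positivity), inv_mul_cancel₀ (by positivity)]

section CDPair

variable (ζ : ℕ → ℂ)

lemma cdPair_succ (N : ℕ) :
    cdPair ζ (N + 1) =
      (C (rsScale (ζ (N + 1)) : ℂ) *
          ((cdPair ζ N).1 - C (conj (ζ (N + 1))) * conjShift (N + 1) (cdPair ζ N).2),
        C (rsScale (ζ (N + 1)) : ℂ) *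
          ((cdPair ζ N).2 + C (conj (ζ (N + 1))) * conjShift (N + 1) (cdPair ζ N).1)) :=
  rfl

lemma natDegree_cdPair_le (N : ℕ) :
    (cdPair ζ N).1.natDegree ≤ N ∧ (cdPair ζ N).2.natDegree ≤ N := by
  induction N with
  | zero => simp [cdPair]
  | succ N ih =>
    have hshift (u : ℂ) (p : ℂ[X]) : (C u * conjShift (N + 1) p).natDegree ≤ N + 1 :=
      (natDegree_C_mul_le _ _).trans (natDegree_conjShift_le _ _)
    rw [cdPair_succ]
    exact ⟨(natDegree_C_mul_le _ _).trans <| (natDegree_sub_le _ _).trans <|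
        max_le (ih.1.trans N.le_succ) (hshift _ _),
      (natDegree_C_mul_le _ _).trans <| (natDegree_add_le _ _).trans <|
        max_le (ih.2.trans N.le_succ) (hshift _ _)⟩

lemma cdPair_eval_zero (N : ℕ) :
    (cdPair ζ N).1.eval 0 = 0 ∧
      (cdPair ζ N).2.eval 0 = ((∏ k ∈ Finset.range N, rsScale (ζ (k + 1)) : ℝ) : ℂ) := by
  induction N with
  | zero => simp [cdPair]
  | succ N ih =>
    simp only [cdPair_succ, eval_mul, eval_sub, eval_add, eval_C, eval_zero_conjShift, ih,
      mul_zero, sub_zero, add_zero, Finset.prod_range_succ]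
    push_cast
    exact ⟨trivial, mul_comm _ _⟩

end CDPair

def su2Matrix (c d : ℂ) : Matrix (Fin 2) (Fin 2) ℂ := !![conj d, -conj c; c, d]

lemma su2Matrix_zero_one : su2Matrix 0 1 = 1 := by
  rw [su2Matrix, Matrix.one_fin_two]
  simp

lemma su2Matrix_mul_su2Matrix (c d c' d' : ℂ) :
    su2Matrix c d * su2Matrix c' d' = su2Matrix (c * conj d' + d * c') (d * d' - c * conj c') := by
  rw [su2Matrix, su2Matrix, su2Matrix, Matrix.mul_fin_two]
  ext i j
  fin_cases i <;> fin_cases j <;> simp <;> ring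

lemma star_su2Matrix (c d : ℂ) : star (su2Matrix c d) = su2Matrix (-c) (conj d) := by
  ext i j
  fin_cases i <;> fin_cases j <;> simp [su2Matrix]

lemma det_su2Matrix (c d : ℂ) :
    (su2Matrix c d).det = ((‖c‖ ^ 2 + ‖d‖ ^ 2 : ℝ) : ℂ) := by
  rw [su2Matrix, Matrix.det_fin_two_of]
  push_cast
  rw [← Complex.mul_conj', ← Complex.mul_conj']
  ring

lemma su2Matrix_mem_specialUnitaryGroup {c d : ℂ} (h : ‖c‖ ^ 2 + ‖d‖ ^ 2 = 1) :
    su2Matrix c d ∈ Matrix.specialUnitaryGroup (Fin 2) ℂ := by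
  have hnorm : ((‖c‖ ^ 2 + ‖d‖ ^ 2 : ℝ) : ℂ) = 1 := by rw [h, Complex.ofReal_one]
  refine Matrix.mem_specialUnitaryGroup_iff.mpr ⟨Matrix.mem_unitaryGroup_iff.mpr ?_, ?_⟩
  · rw [star_su2Matrix, su2Matrix_mul_su2Matrix, ← su2Matrix_zero_one]
    push_cast at hnorm
    rw [← Complex.mul_conj', ← Complex.mul_conj'] at hnorm
    congr 1
    · rw [Complex.conj_conj]
      ring
    · rw [map_neg]
      linear_combination hnorm
  · rw [det_su2Matrix, hnorm]

lemma List.prod_map_range_succ_sub {M : Type*} [Monoid M] (f : ℕ → M) (N : ℕ) :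
    ((List.range (N + 1)).map fun i => f (N + 1 - i)).prod =
      f (N + 1) * ((List.range N).map fun i => f (N - i)).prod := by
  simp [List.range_succ_eq_map, Function.comp_def]

section RootSubgroupFactors

variable (ζ : ℕ → ℂ) {z : ℂ}

lemma rsFactor_eq_su2Matrix (k : ℕ) (hz : ‖z‖ = 1) :
    rsFactor ζ k z = su2Matrix (-(rsScale (ζ k) * conj (ζ k) * z ^ k)) (rsScale (ζ k)) := by
  have hinv : z ^ (-(k : ℤ)) = conj z ^ k := by
    rw [zpow_neg, zpow_natCast, ← inv_pow, Complex.inv_eq_conj hz]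
  ext i j
  fin_cases i <;> fin_cases j <;> simp [rsFactor, su2Matrix, rsScale, hinv] <;> ring

lemma rsFactor_mem_specialUnitaryGroup (k : ℕ) (hz : ‖z‖ = 1) :
    rsFactor ζ k z ∈ Matrix.specialUnitaryGroup (Fin 2) ℂ := by
  rw [rsFactor_eq_su2Matrix ζ k hz]
  refine su2Matrix_mem_specialUnitaryGroup ?_
  simp only [norm_neg, norm_mul, Complex.norm_real, Complex.norm_conj, norm_pow, hz, one_pow,
    mul_one, Real.norm_of_nonneg (rsScale_pos _).le]
  linear_combination rsScale_sq_mul (ζ k)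

lemma rsFactor_prod_eq_su2Matrix (N : ℕ) (hz : ‖z‖ = 1) :
    ((List.range N).map fun i => rsFactor ζ (N - i) z).prod =
      su2Matrix ((cdPair ζ N).1.eval z) ((cdPair ζ N).2.eval z) := by
  induction N with
  | zero => simp [cdPair, su2Matrix, Matrix.one_fin_two]
  | succ N ih =>
    obtain ⟨hc, hd⟩ := natDegree_cdPair_le ζ N
    rw [List.prod_map_range_succ_sub (rsFactor ζ · z), ih, rsFactor_eq_su2Matrix ζ _ hz,
      su2Matrix_mul_su2Matrix, cdPair_succ]
    simp only [eval_mul, eval_sub, eval_add, eval_C, eval_conjShift (Nat.lt_succ_of_le hc) hz,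
      eval_conjShift (Nat.lt_succ_of_le hd) hz, Nat.succ_eq_add_one]
    congr 1 <;> ring

end RootSubgroupFactors

/-- For `|z| = 1`, the partial product `Π_{k=N}^{1}` of the root subgroup factors (with the
`k = N` factor leftmost) equals `[[conj(d_N(z)), −conj(c_N(z))], [c_N(z), d_N(z)]]`;
consequently it lies in `SU(2)`, `|c_N(z)|² + |d_N(z)|² = 1`, `c_N(0) = 0` and
`d_N(0) = Π_{k=1}^{N} (1+|ζ_k|²)^{-1/2} > 0`. -/
theorem stmt1 (ζ : ℕ → ℂ) (N : ℕ) :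
    (∀ z : ℂ, ‖z‖ = 1 →
      (((List.range N).map (fun i => rsFactor ζ (N - i) z)).prod
        = !![starRingEnd ℂ (((cdPair ζ N).2).eval z),
              -(starRingEnd ℂ (((cdPair ζ N).1).eval z));
             ((cdPair ζ N).1).eval z, ((cdPair ζ N).2).eval z]) ∧
      ((List.range N).map (fun i => rsFactor ζ (N - i) z)).prod
          ∈ Matrix.specialUnitaryGroup (Fin 2) ℂ ∧
      ‖((cdPair ζ N).1).eval z‖ ^ 2 + ‖((cdPair ζ N).2).eval z‖ ^ 2 = 1) ∧
    ((cdPair ζ N).1).eval 0 = 0 ∧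
    ((cdPair ζ N).2).eval 0 =
      ((∏ k ∈ Finset.range N, (Real.sqrt (1 + ‖ζ (k + 1)‖ ^ 2))⁻¹ : ℝ) : ℂ) ∧
    0 < ∏ k ∈ Finset.range N, (Real.sqrt (1 + ‖ζ (k + 1)‖ ^ 2))⁻¹ := by
  obtain ⟨hc0, hd0⟩ := cdPair_eval_zero ζ N
  refine ⟨fun z hz => ?_, hc0, hd0, Finset.prod_pos fun k _ => rsScale_pos (ζ (k + 1))⟩
  have hprod := rsFactor_prod_eq_su2Matrix ζ N hz
  have hmem : ((List.range N).map fun i => rsFactor ζ (N - i) z).prod ∈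
      Matrix.specialUnitaryGroup (Fin 2) ℂ :=
    Submonoid.list_prod_mem _ fun A hA => by
      obtain ⟨i, -, rfl⟩ := List.mem_map.mp hA
      exact rsFactor_mem_specialUnitaryGroup ζ _ hz
  have hdet := (Matrix.mem_specialUnitaryGroup_iff.mp hmem).2
  rw [hprod, det_su2Matrix] at hdet
  exact ⟨hprod, hmem, by exact_mod_cast hdet⟩
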